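/- arXiv:1208.5687 — 4 statements merged into one kernel-verified Lean document; each statement's English description precedes it below -/
import Mathlib

section
/- For all integers d ≥ 3 and n ≥ 2, there exist a polynomial p of degree exactly d with real coefficients and n distinct real numbers z_1, …, z_n that form a super-attracting cycle for the Newton map N_p. -/
/-- The Newton map of a real polynomial `p`: `N_p(x) = x - p(x)/p'(x)`. -/
noncomputable def newtonMap (p : Polynomial ℝ) (x : ℝ) : ℝ :=
  x - p.eval x / p.derivative.eval x

namespace NA
open Polynomial

/-- `p'(x)` for `p = x^(e+3) - (e+3)x + t` -/
def den (e : ℕ) (x : ℝ) : ℝ := ((e:ℝ)+3) * x^(e+2) - ((e:ℝ)+3)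
/-- `p(x)` -/
def num (e : ℕ) (t x : ℝ) : ℝ := x^(e+3) - ((e:ℝ)+3) * x + t
/-- explicit form of the Newton map of `p` -/
noncomputable def f (e : ℕ) (t x : ℝ) : ℝ := x - num e t x / den e x
/-- the orbit of `0` under the Newton map -/
noncomputable def orb (e : ℕ) (t : ℝ) : ℕ → ℝ
  | 0 => 0
  | j+1 => f e t (orb e t j)
/-- the polynomial `x^(e+3) - (e+3)x + t` -/
noncomputable def Pp (e : ℕ) (t : ℝ) : Polynomial ℝ :=
  X^(e+3) + (C t - C ((e:ℝ)+3) * X)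

lemma f_def (e : ℕ) (t x : ℝ) : f e t x = x - num e t x / den e x := rfl
lemma orb_succ (e : ℕ) (t : ℝ) (j : ℕ) : orb e t (j+1) = f e t (orb e t j) := rfl

variable {e : ℕ} {t x : ℝ}

lemma den_neg (hx0 : 0 ≤ x) (hx1 : x < 1) : den e x < 0 := by
  have h1 : x^(e+2) < 1 := pow_lt_one₀ hx0 hx1 (by omega)
  have h2 : (0:ℝ) < (e:ℝ)+3 := by positivity
  unfold den; nlinarith

lemma den_pos (hx : 1 < x) : 0 < den e x := by
  have h1 : (1:ℝ) < x^(e+2) := one_lt_pow₀ hx (by omega)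
  have h2 : (0:ℝ) < (e:ℝ)+3 := by positivity
  unfold den; nlinarith

lemma num_ge (hx0 : 0 ≤ x) : t - ((e:ℝ)+2) ≤ num e t x := by
  have h := one_add_mul_le_pow (show (-2:ℝ) ≤ x - 1 by linarith) (e+3)
  have h2 : (1:ℝ) + (x-1) = x := by ring
  rw [h2] at h
  have h3 : ((e+3 : ℕ):ℝ) = (e:ℝ)+3 := by push_cast; ring
  rw [h3] at h
  unfold num; nlinarith

/-- key inequality : (e+3) x^(e+2) - (e+2) x^(e+3) < 1 on [0,1) -/
lemma key_ineq : ∀ (e : ℕ), 0 ≤ x → x < 1 → ((e:ℝ)+3) * x^(e+2) - ((e:ℝ)+2) * x^(e+3) < 1 := by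
  intro e
  induction e with
  | zero =>
    intro hx0 hx1
    have h1 : 0 < 1 - x := by linarith
    have := mul_pos (mul_pos h1 h1) (show (0:ℝ) < 1 + 2*x by linarith)
    push_cast
    nlinarith
  | succ m IH =>
    intro hx0 hx1
    have IH' := IH hx0 hx1
    rcases eq_or_lt_of_le hx0 with h0 | h0
    · rw [← h0]
      rw [zero_pow (by omega), zero_pow (by omega)]
      push_cast
      norm_num
    · have h1 : x * (((m:ℝ)+3) * x^(m+2) - ((m:ℝ)+2) * x^(m+3)) < x * 1 :=
        (mul_lt_mul_iff_right₀ h0).mpr IH'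
      have h2 : x^(m+3) ≤ 1 := pow_le_one₀ hx0 hx1.le
      have h3 : x^(m+3) * (1-x) ≤ 1 * (1-x) :=
        mul_le_mul_of_nonneg_right h2 (by linarith)
      have key : ((m:ℝ)+1+3) * x^(m+1+2) - ((m:ℝ)+1+2) * x^(m+1+3)
          = x * (((m:ℝ)+3) * x^(m+2) - ((m:ℝ)+2) * x^(m+3)) + x^(m+3) * (1-x) := by
        ring
      push_cast
      push_cast at key
      rw [key]
      nlinarith

lemma step_ge (ht : (e:ℝ)+2 ≤ t) (hx0 : 0 ≤ x) (hx1 : x < 1) : x ≤ f e t x := by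
  have hd := den_neg (e := e) hx0 hx1
  have hn : 0 ≤ num e t x := by have := num_ge (e := e) (t := t) hx0; linarith
  have : num e t x / den e x ≤ 0 := div_nonpos_of_nonneg_of_nonpos hn hd.le
  unfold f; linarith

lemma step_gt (ht : (e:ℝ)+2 < t) (hx0 : 0 ≤ x) (hx1 : x < 1) : x < f e t x := by
  have hd := den_neg (e := e) hx0 hx1
  have hn : 0 < num e t x := by have := num_ge (e := e) (t := t) hx0; linarith
  have : num e t x / den e x < 0 := div_neg_of_pos_of_neg hn hd
  unfold f; linarith

lemma step_lt_one (hx0 : 0 ≤ x) (hx1 : x < 1) : f e ((e:ℝ)+2) x < 1 := by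
  have hd := den_neg (e := e) hx0 hx1
  have hk := key_ineq (x := x) e hx0 hx1
  have hid : (x - 1) * den e x - num e ((e:ℝ)+2) x
      = 1 - (((e:ℝ)+3) * x^(e+2) - ((e:ℝ)+2) * x^(e+3)) := by
    unfold num den; ring
  have hlt : num e ((e:ℝ)+2) x < (x - 1) * den e x := by linarith
  have h2 : x - 1 < num e ((e:ℝ)+2) x / den e x := by
    rw [lt_div_iff_of_neg hd]; linarith [hlt]
  unfold f; linarith


lemma orb_one (e : ℕ) (t : ℝ) : orb e t 1 = t / ((e:ℝ)+3) := by
  have h : orb e t 1 = f e t 0 := rfl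
  rw [h, f_def]
  unfold num den
  rw [zero_pow (by omega : e+3 ≠ 0), zero_pow (by omega : e+2 ≠ 0)]
  have h1 : (0:ℝ) - ((e:ℝ)+3)*0 + t = t := by ring
  have h2 : ((e:ℝ)+3)*0 - ((e:ℝ)+3) = -((e:ℝ)+3) := by ring
  rw [h1, h2, div_neg, zero_sub, neg_neg]

/-- at the boundary parameter the whole orbit stays in [0,1) -/
lemma orb_boundary : ∀ j, 0 ≤ orb e ((e:ℝ)+2) j ∧ orb e ((e:ℝ)+2) j < 1 := by
  intro j
  induction j with
  | zero => simp [orb]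
  | succ m IH =>
    obtain ⟨h0, h1⟩ := IH
    constructor
    · exact le_trans h0 (step_ge le_rfl h0 h1)
    · exact step_lt_one h0 h1

lemma orb_nonneg (ht : (e:ℝ)+2 ≤ t) :
    ∀ j, (∀ l, l < j → orb e t l < 1) → 0 ≤ orb e t j := by
  intro j
  induction j with
  | zero => intro _; simp [orb]
  | succ m IH =>
    intro h
    have hm0 : 0 ≤ orb e t m := IH (fun l hl => h l (by omega))
    have hm1 : orb e t m < 1 := h m (by omega)
    exact le_trans hm0 (step_ge ht hm0 hm1)

lemma orb_mono (ht : (e:ℝ)+2 ≤ t) :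
    ∀ j l, j ≤ l → (∀ m, m < l → orb e t m < 1) → orb e t j ≤ orb e t l := by
  intro j l hjl h
  induction l with
  | zero => simp_all
  | succ m IH =>
    rcases Nat.lt_or_ge j (m+1) with hj | hj
    · have hjm : j ≤ m := by omega
      have hle := IH hjm (fun l hl => h l (by omega))
      have hm0 : 0 ≤ orb e t m := orb_nonneg ht m (fun l hl => h l (by omega))
      have hm1 : orb e t m < 1 := h m (by omega)
      exact le_trans hle (step_ge ht hm0 hm1)
    · have : j = m+1 := by omega
      subst this; rfl

lemma orb_strict_mono (ht : (e:ℝ)+2 < t) :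
    ∀ j l, j < l → (∀ m, m < l → orb e t m < 1) → orb e t j < orb e t l := by
  intro j l hjl h
  have hl0 : 0 ≤ orb e t (l-1) := orb_nonneg ht.le _ (fun m hm => h m (by omega))
  have hl1 : orb e t (l-1) < 1 := h (l-1) (by omega)
  have hstep : orb e t (l-1) < orb e t l := by
    have : orb e t ((l-1)+1) = f e t (orb e t (l-1)) := rfl
    have hgt := step_gt ht hl0 hl1
    have hll : (l-1)+1 = l := by omega
    rw [hll] at this
    rw [this]; exact hgt
  have hle : orb e t j ≤ orb e t (l-1) :=
    orb_mono ht.le j (l-1) (by omega) (fun m hm => h m (by omega))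
  linarith

/-- continuity of the two-variable newton map at points with nonzero denominator -/
lemma contf (ht : den e x ≠ 0) :
    ContinuousAt (fun q : ℝ × ℝ => f e q.1 q.2) (t, x) := by
  have hnum : Continuous fun q : ℝ × ℝ => num e q.1 q.2 := by
    unfold num; fun_prop
  have hden : Continuous fun q : ℝ × ℝ => den e q.2 := by
    unfold den; fun_prop
  have : ContinuousAt (fun q : ℝ × ℝ => num e q.1 q.2 / den e q.2) (t, x) :=
    hnum.continuousAt.div hden.continuousAt ht
  exact continuousAt_snd.sub this

lemma cont_orb : ∀ j, (∀ l, l < j → 0 ≤ orb e t l ∧ orb e t l < 1) →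
    ContinuousAt (fun s => orb e s j) t := by
  intro j
  induction j with
  | zero => intro _; exact continuousAt_const
  | succ m IH =>
    intro h
    have hc : ContinuousAt (fun s => orb e s m) t := IH (fun l hl => h l (by omega))
    have hb := h m (by omega)
    have hd : den e (orb e t m) ≠ 0 := (den_neg hb.1 hb.2).ne
    have hpair : ContinuousAt (fun s => ((s, orb e s m) : ℝ × ℝ)) t :=
      continuousAt_id.prodMk hc
    exact ContinuousAt.comp (g := fun q : ℝ × ℝ => f e q.1 q.2)
      (f := fun s => ((s, orb e s m) : ℝ × ℝ)) (contf hd) hpair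

lemma Pp_natDegree (e : ℕ) (t : ℝ) : (Pp e t).natDegree = e+3 := by
  have h1 : (C t - C ((e:ℝ)+3) * X).degree < (X^(e+3) : Polynomial ℝ).degree := by
    apply lt_of_le_of_lt (degree_sub_le _ _)
    rw [degree_X_pow]
    apply max_lt
    · exact lt_of_le_of_lt degree_C_le (by exact_mod_cast WithBot.coe_lt_coe.mpr (by omega : 0 < e+3))
    · exact lt_of_le_of_lt (degree_C_mul_X_le _) (by exact_mod_cast WithBot.coe_lt_coe.mpr (by omega : 1 < e+3))
  have h2 : (Pp e t).degree = (e+3 : ℕ) := by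
    rw [Pp, degree_add_eq_left_of_degree_lt h1, degree_X_pow]
  exact natDegree_eq_of_degree_eq_some h2

lemma Pp_eval (e : ℕ) (t x : ℝ) : (Pp e t).eval x = num e t x := by
  simp [Pp, num]; ring

lemma Pp_deriv (e : ℕ) (t : ℝ) :
    (Pp e t).derivative = C ((e:ℝ)+3) * X^(e+2) - C ((e:ℝ)+3) := by
  rw [Pp]
  rw [derivative_add, derivative_X_pow, derivative_sub, derivative_C,
    derivative_C_mul, derivative_X]
  have h1 : (e+3-1 : ℕ) = e+2 := by omega
  have h2 : ((e+3 : ℕ) : ℝ) = (e:ℝ)+3 := by push_cast; ring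
  rw [h1, h2]
  ring

lemma Pp_deriv_eval (e : ℕ) (t x : ℝ) : (Pp e t).derivative.eval x = den e x := by
  rw [Pp_deriv]; simp [den]

lemma newton_eq (e : ℕ) (t x : ℝ) : _root_.newtonMap (Pp e t) x = f e t x := by
  rw [_root_.newtonMap, f, Pp_eval, Pp_deriv_eval]

lemma Pp_deriv2_eval0 (e : ℕ) (t : ℝ) :
    (Pp e t).derivative.derivative.eval 0 = 0 := by
  rw [Pp_deriv]
  rw [derivative_sub, derivative_C_mul, derivative_X_pow, derivative_C]
  simp [zero_pow (by omega : e+1 ≠ 0)]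

lemma deriv_newton_zero (e : ℕ) (t : ℝ) : deriv (_root_.newtonMap (Pp e t)) 0 = 0 := by
  have hP := Polynomial.hasDerivAt (Pp e t) 0
  have hP' := Polynomial.hasDerivAt (Pp e t).derivative 0
  have hden0 : (Pp e t).derivative.eval 0 = -((e:ℝ)+3) := by
    rw [Pp_deriv_eval]; simp [den, zero_pow (by omega : e+2 ≠ 0)]
  have hne : (Pp e t).derivative.eval 0 ≠ 0 := by
    rw [hden0]; have he0 : (0:ℝ) ≤ (e:ℝ) := Nat.cast_nonneg e; intro h; nlinarith
  have hdiv := hP.div hP' hne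
  have hval : ((Pp e t).derivative.eval 0 * (Pp e t).derivative.eval 0 -
      (Pp e t).eval 0 * (Pp e t).derivative.derivative.eval 0) /
      ((Pp e t).derivative.eval 0)^2 = 1 := by
    rw [Pp_deriv2_eval0, mul_zero, sub_zero, ← sq, div_self (pow_ne_zero 2 hne)]
  rw [hval] at hdiv
  have hN : HasDerivAt (_root_.newtonMap (Pp e t)) (1 - 1) 0 := by
    have h := (hasDerivAt_id (0:ℝ)).sub hdiv
    have heq : _root_.newtonMap (Pp e t) = fun y =>
        id y - (Pp e t).eval y / (Pp e t).derivative.eval y := rfl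
    rw [heq]
    exact h
  simpa using hN.deriv

lemma f_root (e : ℕ) {t w : ℝ} (hw1 : 1 < w) (ht : ((e:ℝ)+2) * w^(e+3) = t) :
    f e t w = 0 := by
  have hd : 0 < den e w := by
    have h1 : (1:ℝ) < w^(e+2) := one_lt_pow₀ hw1 (by omega)
    have : (0:ℝ) < (e:ℝ)+3 := by positivity
    unfold den; nlinarith
  have hnum : num e t w = w * den e w := by
    rw [num, den, ← ht]; ring
  rw [f, hnum, mul_div_assoc, div_self hd.ne', mul_one, sub_self]

/-- 2^(e+4) beats (e+3)^2 -/
lemma two_pow_big : ∀ e : ℕ, ((e:ℝ)+3)^2 < 2^(e+4) := by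
  intro e
  induction e with
  | zero => norm_num
  | succ m IH =>
    have hm : (0:ℝ) ≤ (m:ℝ) := Nat.cast_nonneg m
    have : (2:ℝ)^(m+1+4) = 2 * 2^(m+4) := by ring
    push_cast
    push_cast at IH
    rw [this]
    nlinarith


lemma step_shrink (e : ℕ) {t δ η y w : ℝ}
    (hδ : 0 < δ) (hη : η = δ / (2*((e:ℝ)+3)*((e:ℝ)+2)))
    (hx0 : 0 ≤ y) (hx1 : y < 1)
    (hn : δ ≤ num e t y)
    (hw : w = y - num e t y / den e y) (hw2 : w < 2) : y ≤ 1 - η := by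
  have he0 : (0:ℝ) ≤ (e:ℝ) := Nat.cast_nonneg e
  have hdneg : den e y < 0 := den_neg hx0 hx1
  have hdpos : 0 < -den e y := by linarith
  have hq : num e t y / (-den e y) ≤ 2 := by
    have h2 : -(num e t y / den e y) = w - y := by rw [hw]; ring
    rw [div_neg, h2]; linarith
  have hdb : δ/2 ≤ -den e y := by
    have h4 : num e t y ≤ 2 * (-den e y) := (div_le_iff₀ hdpos).mp hq
    linarith
  have hpow : 1 - y^(e+2) ≤ ((e:ℝ)+2) * (1 - y) := by
    have h := one_add_mul_le_pow (show (-2:ℝ) ≤ y - 1 by linarith) (e+2)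
    have h2 : (1:ℝ) + (y-1) = y := by ring
    rw [h2] at h
    have h3 : ((e+2 : ℕ):ℝ) = (e:ℝ)+2 := by push_cast; ring
    rw [h3] at h
    nlinarith
  have hden_eq : -den e y = ((e:ℝ)+3) * (1 - y^(e+2)) := by unfold den; ring
  have h1 : δ/2 ≤ ((e:ℝ)+3) * (1 - y^(e+2)) := by rw [← hden_eq]; exact hdb
  have h2 : δ/2 ≤ ((e:ℝ)+3) * (((e:ℝ)+2) * (1-y)) := by nlinarith
  have hca : (0:ℝ) < 2*((e:ℝ)+3)*((e:ℝ)+2) := by positivity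
  rw [hη]
  have h3 : δ / (2*((e:ℝ)+3)*((e:ℝ)+2)) ≤ 1 - y := by
    rw [div_le_iff₀ hca]; nlinarith
  linarith

theorem exists_param (e k : ℕ) :
    ∃ t : ℝ, ((e:ℝ)+2) < t ∧ (∀ j, j ≤ k → orb e t j < 1) ∧
      ((e:ℝ)+2) * (orb e t (k+1))^(e+3) = t := by
  set a : ℝ := (e:ℝ)+2 with ha
  set c : ℝ := (e:ℝ)+3 with hc
  set M : ℝ := c^2 with hM
  have he0 : (0:ℝ) ≤ (e:ℝ) := Nat.cast_nonneg e
  have ha2 : (2:ℝ) ≤ a := by rw [ha]; linarith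
  have hc3 : (3:ℝ) ≤ c := by rw [hc]; linarith
  have hac : a + 1 = c := by simp [ha, hc]; ring
  have haM : a + 1 < M := by nlinarith
  -- the set of good parameters
  set S : Set ℝ := {t : ℝ | t ∈ Set.Icc a M ∧
    ∀ s ∈ Set.Icc a t, ∀ j ≤ k, orb e s j < 1} with hS
  have hS_a : a ∈ S := by
    refine ⟨⟨le_rfl, by nlinarith⟩, ?_⟩
    intro s hs j _
    have : s = a := le_antisymm hs.2 hs.1
    subst this
    exact (orb_boundary j).2
  have hSbdd : BddAbove S := ⟨M, fun t ht => ht.1.2⟩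
  have hSne : S.Nonempty := ⟨a, hS_a⟩
  set b : ℝ := sSup S with hb
  clear_value b
  have hb_low : a ≤ b := by rw [hb]; exact le_csSup hSbdd hS_a
  have hb_le : b ≤ M := by rw [hb]; exact csSup_le hSne (fun t ht => ht.1.2)
  have hS_dc : ∀ t₀ ∈ S, ∀ s, a ≤ s → s ≤ t₀ → s ∈ S := by
    intro t₀ ht₀ s hs1 hs2
    exact ⟨⟨hs1, le_trans hs2 ht₀.1.2⟩,
      fun s' hs' j hj => ht₀.2 s' ⟨hs'.1, le_trans hs'.2 hs2⟩ j hj⟩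
  have hIco : ∀ s, a ≤ s → s < b → s ∈ S := by
    intro s hs1 hs2
    rw [hb] at hs2
    obtain ⟨t₀, ht₀S, hst₀⟩ := exists_lt_of_lt_csSup hSne hs2
    exact hS_dc t₀ ht₀S s hs1 hst₀.le
  -- good parameters have nonneg orbits
  have hgood_nonneg : ∀ t₀ ∈ S, ∀ j, j ≤ k+1 → 0 ≤ orb e t₀ j := by
    intro t₀ ht₀ j hj
    refine orb_nonneg (by rw [← ha]; exact ht₀.1.1) j (fun l hl => ?_)
    exact ht₀.2 t₀ ⟨ht₀.1.1, le_rfl⟩ l (by omega)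
  have hgood_self : ∀ t₀ ∈ S, ∀ j, j ≤ k → orb e t₀ j < 1 :=
    fun t₀ ht₀ j hj => ht₀.2 t₀ ⟨ht₀.1.1, le_rfl⟩ j hj
  -- continuity of the relevant orbit functions at good parameters
  have hcS : ∀ t₀ ∈ S, ∀ j, j ≤ k+1 → ContinuousAt (fun s => orb e s j) t₀ := by
    intro t₀ ht₀ j hj
    refine cont_orb j (fun l hl => ⟨hgood_nonneg t₀ ht₀ l (by omega), hgood_self t₀ ht₀ l (by omega)⟩)
  by_cases H : ∃ t₀ ∈ S, a * (orb e t₀ (k+1))^(e+3) - t₀ ≥ 0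
  · -- IVT case
    obtain ⟨t₀, ht₀S, ht₀ψ⟩ := H
    have hat₀ : a ≤ t₀ := ht₀S.1.1
    have hcontOn : ContinuousOn (fun s => a * (orb e s (k+1))^(e+3) - s) (Set.Icc a t₀) := by
      intro s hs
      have hsS : s ∈ S := hS_dc t₀ ht₀S s hs.1 hs.2
      have h1 : ContinuousAt (fun s => a * (orb e s (k+1))^(e+3) - s) s := by
        have := hcS s hsS (k+1) le_rfl
        fun_prop
      exact h1.continuousWithinAt
    have hψa : a * (orb e a (k+1))^(e+3) - a < 0 := by
      have h1 := orb_boundary (e := e) (k+1)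
      have h2 : (orb e a (k+1))^(e+3) < 1 := pow_lt_one₀ h1.1 h1.2 (by omega)
      nlinarith
    have h0mem : (0:ℝ) ∈ Set.Icc (a * (orb e a (k+1))^(e+3) - a) (a * (orb e t₀ (k+1))^(e+3) - t₀) :=
      ⟨hψa.le, ht₀ψ⟩
    obtain ⟨ts, htsIcc, htsEq⟩ := intermediate_value_Icc hat₀ hcontOn h0mem
    have htsEq' : a * (orb e ts (k+1))^(e+3) - ts = 0 := htsEq
    have htsS : ts ∈ S := hS_dc t₀ ht₀S ts htsIcc.1 htsIcc.2
    have htsa : a < ts := by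
      rcases eq_or_lt_of_le htsIcc.1 with h | h
      · exfalso; rw [← h] at htsEq'; linarith
      · exact h
    refine ⟨ts, htsa, fun j hj => hgood_self ts htsS j hj, by linarith⟩
  · -- contradiction case
    push_neg at H
    -- all good orbits stay below 2 at step k+1
    have h2bd : ∀ t₀ ∈ S, orb e t₀ (k+1) < 2 := by
      intro t₀ ht₀
      by_contra hcon
      push_neg at hcon
      have h1 : (2:ℝ)^(e+3) ≤ (orb e t₀ (k+1))^(e+3) :=
        pow_le_pow_left₀ (by norm_num) hcon _
      have h2 : a * 2^(e+3) ≤ a * (orb e t₀ (k+1))^(e+3) :=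
        mul_le_mul_of_nonneg_left h1 (by linarith)
      have h3 : M < 2^(e+4) := by
        have := two_pow_big e
        simpa [hM, hc] using this
      have h4 : (2:ℝ)^(e+4) = 2 * 2^(e+3) := by ring
      have h5 := H t₀ ht₀
      have ht₀M : t₀ ≤ M := ht₀.1.2
      nlinarith
    -- b is strictly bigger than a : extension beyond a
    have hext : ∀ t₀ ∈ S, t₀ < M → ∃ ε > 0, t₀ + ε ≤ M ∧ (∀ s, t₀ ≤ s → s ≤ t₀ + ε → s ∈ S) := by
      intro t₀ ht₀ ht₀M
      have hev : ∀ᶠ s in nhds t₀, ∀ j ∈ Finset.range (k+1), orb e s j < 1 := by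
        rw [Filter.eventually_all_finset]
        intro j hj
        have hj' : j ≤ k := by simpa using Nat.lt_succ_iff.mp (Finset.mem_range.mp hj)
        have hcont := hcS t₀ ht₀ j (by omega)
        exact hcont.eventually_mem (Iio_mem_nhds (hgood_self t₀ ht₀ j hj'))
      obtain ⟨ε0, hε0, hball⟩ := Metric.eventually_nhds_iff.mp hev
      set ε : ℝ := min (ε0/2) ((M - t₀)/2) with hε
      have hεpos : 0 < ε := by
        apply lt_min (by linarith) (by linarith)
      refine ⟨ε, hεpos, by
        have : ε ≤ (M - t₀)/2 := min_le_right _ _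
        linarith, ?_⟩
      intro s hs1 hs2
      have hsM : s ≤ M := by
        have : ε ≤ (M - t₀)/2 := min_le_right _ _
        linarith
      have hsa : a ≤ s := le_trans ht₀.1.1 hs1
      refine ⟨⟨hsa, hsM⟩, ?_⟩
      intro s' hs' j hj
      rcases le_or_gt s' t₀ with h | h
      · exact ht₀.2 s' ⟨hs'.1, h⟩ j hj
      · have hdist : dist s' t₀ < ε0 := by
          rw [Real.dist_eq, abs_of_nonneg (by linarith)]
          have h1 : s' ≤ t₀ + ε := le_trans hs'.2 hs2
          have h2 : ε ≤ ε0/2 := min_le_left _ _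
          linarith
        exact hball hdist j (Finset.mem_range.mpr (by omega))
    have hb_gt : a < b := by
      obtain ⟨ε, hε, hεM, hgood⟩ := hext a hS_a (by nlinarith)
      have h1 : a + ε ∈ S := hgood (a+ε) (by linarith) le_rfl
      have h2 := le_csSup hSbdd h1
      rw [← hb] at h2
      linarith
    -- quantitative bound below 1 on [a+δ, b)
    obtain ⟨δ, hδ⟩ : ∃ x : ℝ, x = (b - a)/2 := ⟨_, rfl⟩
    have hδpos : 0 < δ := by rw [hδ]; linarith
    obtain ⟨η, hη⟩ : ∃ x : ℝ, x = δ / (2*c*a) := ⟨_, rfl⟩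
    have hca : (0:ℝ) < 2*c*a := by nlinarith
    have hηpos : 0 < η := by rw [hη]; exact div_pos hδpos hca
    have hη1 : η < 1 := by
      rw [hη, div_lt_one hca]
      have hbM : b ≤ M := hb_le
      have : δ ≤ M/2 := by rw [hδ]; linarith
      nlinarith
    have hbound : ∀ t₀ ∈ S, a + δ ≤ t₀ → ∀ j, j ≤ k → orb e t₀ j ≤ 1 - η := by
      intro t₀ ht₀S ht₀δ j hj
      have hx0 : 0 ≤ orb e t₀ k := hgood_nonneg t₀ ht₀S k (by omega)
      have hx1 : orb e t₀ k < 1 := hgood_self t₀ ht₀S k le_rfl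
      have hnum : t₀ - a ≤ num e t₀ (orb e t₀ k) := by
        have := num_ge (e := e) (t := t₀) (x := orb e t₀ k) hx0
        rw [← ha] at this
        exact this
      have hyk : orb e t₀ k ≤ 1 - η :=
        step_shrink e hδpos (by rw [hη, ha, hc]) hx0 hx1
          (by linarith)
          (by rw [orb_succ, f_def]) (h2bd t₀ ht₀S)
      have := orb_mono (e := e) (t := t₀) (by rw [← ha]; exact ht₀S.1.1) j k hj
        (fun m hm => hgood_self t₀ ht₀S m (by omega))
      linarith
    -- now show b itself is good with margin
    have hbcast : (e:ℝ)+2 ≤ b := by rw [← ha]; linarith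
    have haδb : a + δ < b := by rw [hδ]; linarith
    have hmain : ∀ j, j ≤ k → ∀ l, l ≤ j → 0 ≤ orb e b l ∧ orb e b l ≤ 1 - η := by
      intro j
      induction j with
      | zero =>
        intro _ l hl
        have hl0 : l = 0 := by omega
        subst hl0
        refine ⟨le_rfl, ?_⟩
        show (0:ℝ) ≤ 1 - η
        linarith
      | succ m IH =>
        intro hm l hl
        rcases Nat.lt_or_ge l (m+1) with h | h
        · exact IH (by omega) l (by omega)
        · have hl' : l = m+1 := by omega
          subst hl'
          have hprev : ∀ l', l' < m+1 → 0 ≤ orb e b l' ∧ orb e b l' < 1 := by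
            intro l' hl'
            obtain ⟨h1, h2⟩ := IH (by omega) l' (by omega)
            exact ⟨h1, by linarith⟩
          have hcont : ContinuousAt (fun s => orb e s (m+1)) b := cont_orb (m+1) hprev
          have hub : orb e b (m+1) ≤ 1 - η := by
            have hIoo : Set.Ioo (a+δ) b ∈ nhdsWithin b (Set.Iio b) :=
              Ioo_mem_nhdsLT_of_mem ⟨haδb, le_rfl⟩
            have hev : ∀ᶠ s in nhdsWithin b (Set.Iio b), orb e s (m+1) ≤ 1 - η := by
              filter_upwards [hIoo] with s hs
              exact hbound s (hIco s (by linarith [hs.1, hδpos]) hs.2) hs.1.le (m+1) hm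
            exact le_of_tendsto (hcont.tendsto.mono_left nhdsWithin_le_nhds) hev
          have hnn : 0 ≤ orb e b (m+1) :=
            orb_nonneg hbcast (m+1) (fun l' hl' => (hprev l' hl').2)
          exact ⟨hnn, hub⟩
    have hb_S : b ∈ S := by
      refine ⟨⟨hb_low, hb_le⟩, ?_⟩
      intro s hs j hj
      rcases lt_or_eq_of_le hs.2 with h | h
      · exact hgood_self s (hIco s hs.1 h) j hj
      · subst h
        have := (hmain k le_rfl j hj).2
        linarith
    rcases lt_or_eq_of_le hb_le with hbM | hbM
    · -- b < M : can extend, contradicting sup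
      obtain ⟨ε, hε, hεM, hgood⟩ := hext b hb_S hbM
      have h1 : b + ε ∈ S := hgood (b+ε) (by linarith) le_rfl
      have h2 := le_csSup hSbdd h1
      rw [← hb] at h2
      linarith
    · -- b = M : impossible
      have horb1 : orb e b 1 = b / c := by rw [orb_one, hc]
      have hbc : orb e b 1 = c := by
        have hcne : c ≠ 0 := by positivity
        rw [horb1, hbM, hM, sq, mul_div_assoc, div_self hcne, mul_one]
      rcases Nat.eq_zero_or_pos k with hk | hk
      · subst hk
        have hH := H b hb_S
        rw [hbc] at hH
        have hp : c^2 ≤ c^(e+3) := by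
          apply pow_le_pow_right₀ (by linarith) (by omega)
        rw [hbM, hM] at hH
        nlinarith
      · have := (hmain k le_rfl 1 (by omega)).2
        rw [hbc] at this
        linarith

end NA

/-- For all integers `d ≥ 3` and `n ≥ 2`, there exist a polynomial `p` of degree exactly
`d` with real coefficients and `n` distinct real numbers forming a super-attracting
cycle for the Newton map `N_p`: each point is not a root of `p` nor of `p'`, `N_p` maps
each `z i` to `z (i+1)` (cyclically), and the multiplier `∏ i, N_p'(z i)` vanishes. -/
theorem exists_real_poly_newton_superattracting_cycle
    (d n : ℕ) (hd : 3 ≤ d) (hn : 2 ≤ n) :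
    ∃ (p : Polynomial ℝ) (z : Fin n → ℝ),
      p.natDegree = d ∧
      Function.Injective z ∧
      (∀ i : Fin n,
        p.eval (z i) ≠ 0 ∧
        p.derivative.eval (z i) ≠ 0 ∧
        newtonMap p (z i) = z (i + ⟨1, by omega⟩)) ∧
      ∏ i : Fin n, deriv (newtonMap p) (z i) = 0 := by
  obtain ⟨e, rfl⟩ : ∃ e, d = e + 3 := ⟨d - 3, by omega⟩
  obtain ⟨k, rfl⟩ : ∃ k, n = k + 2 := ⟨n - 2, by omega⟩
  obtain ⟨t, ht, hgood, hψ⟩ := NA.exists_param e k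
  have he0 : (0:ℝ) ≤ (e:ℝ) := Nat.cast_nonneg e
  -- basic orbit facts
  have hnonneg : ∀ j, j ≤ k+1 → 0 ≤ NA.orb e t j := by
    intro j hj
    exact NA.orb_nonneg ht.le j (fun l hl => hgood l (by omega))
  have hw1 : 1 < NA.orb e t (k+1) := by
    have hw0 : 0 ≤ NA.orb e t (k+1) := hnonneg (k+1) le_rfl
    by_contra hcon
    push_neg at hcon
    have : (NA.orb e t (k+1))^(e+3) ≤ 1 := pow_le_one₀ hw0 hcon
    nlinarith
  -- the cycle
  refine ⟨NA.Pp e t, fun i : Fin (k+2) => NA.orb e t i.val, ?_, ?_, ?_, ?_⟩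
  · exact NA.Pp_natDegree e t
  · -- injectivity
    have hlt : ∀ p q : ℕ, p < q → q ≤ k+1 → NA.orb e t p < NA.orb e t q := by
      intro p q hpq hq
      rcases Nat.lt_or_ge q (k+1) with h | h
      · exact NA.orb_strict_mono ht p q hpq (fun m hm => hgood m (by omega))
      · have hq' : q = k+1 := by omega
        subst hq'
        exact lt_of_lt_of_le (lt_trans (hgood p (by omega)) hw1) le_rfl
    intro i j hij
    by_contra hne
    have hne' : (i : ℕ) ≠ (j : ℕ) := fun h => hne (Fin.ext h)
    have hbi : (i : ℕ) ≤ k+1 := by omega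
    have hbj : (j : ℕ) ≤ k+1 := by omega
    rcases Nat.lt_or_ge (i : ℕ) (j : ℕ) with h | h
    · exact absurd hij (ne_of_lt (hlt _ _ h hbj))
    · have h' : (j:ℕ) < (i:ℕ) := by omega
      exact absurd hij.symm (ne_of_lt (hlt _ _ h' hbi))
  · -- cycle conditions
    intro i
    have hiv : (i : ℕ) ≤ k+1 := by omega
    have hz0 : 0 ≤ NA.orb e t i.val := hnonneg _ hiv
    refine ⟨?_, ?_, ?_⟩
    · -- p(z i) ≠ 0
      rw [NA.Pp_eval]
      have := NA.num_ge (e := e) (t := t) (x := NA.orb e t i.val) hz0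
      intro hcon
      rw [hcon] at this
      linarith
    · -- p'(z i) ≠ 0
      rw [NA.Pp_deriv_eval]
      rcases Nat.lt_or_ge (i : ℕ) (k+1) with h | h
      · exact (NA.den_neg hz0 (hgood _ (by omega))).ne
      · have h' : (i:ℕ) = k+1 := by omega
        simp only [h']
        exact (NA.den_pos hw1).ne'
    · -- Newton map sends z i to z (i+1)
      rw [NA.newton_eq]
      rcases Nat.lt_or_ge ((i:ℕ) + 1) (k+2) with h | h
      · have h2 : ((i + ⟨1, by omega⟩ : Fin (k+2)) : ℕ) = (i:ℕ) + 1 := by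
          rw [Fin.add_def]
          have h1 : ((⟨1, by omega⟩ : Fin (k+2)) : ℕ) = 1 := rfl
          rw [h1]
          exact Nat.mod_eq_of_lt h
        simp only [h2]
        exact (NA.orb_succ e t i.val).symm
      · have h' : (i:ℕ) = k+1 := by omega
        have h2 : ((i + ⟨1, by omega⟩ : Fin (k+2)) : ℕ) = 0 := by
          rw [Fin.add_def]
          have h1 : ((⟨1, by omega⟩ : Fin (k+2)) : ℕ) = 1 := rfl
          rw [h1, h']
          exact Nat.mod_self _
        simp only [h2, h']
        show NA.f e t (NA.orb e t (k+1)) = NA.orb e t 0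
        have h0 : NA.orb e t 0 = 0 := rfl
        rw [h0]
        exact NA.f_root e hw1 hψ
  · -- multiplier vanishes
    apply Finset.prod_eq_zero (Finset.mem_univ (⟨0, by omega⟩ : Fin (k+2)))
    show deriv (newtonMap (NA.Pp e t)) (NA.orb e t ((⟨0, by omega⟩ : Fin (k+2)) : ℕ)) = 0
    have h1 : ((⟨0, by omega⟩ : Fin (k+2)) : ℕ) = 0 := rfl
    rw [h1]
    have h0 : NA.orb e t 0 = 0 := rfl
    rw [h0]
    exact NA.deriv_newton_zero e t
end

section
/- Let q be a complex polynomial of degree 3 and suppose distinct points w_1, w_2 ∈ ℂ form a super-attracting 2-cycle for N_q, labeled so that q″(w_1) = 0. Let T(z) = (w_2 − w_1)z + w_1. Then q ∘ T is a nonzero scalar multiple of the polynomial z³ − 2z + 2; consequently N_q ∘ T(z) = T(N_p(z)) for all z with p′(z) ≠ 0, where p(z) = z³ − 2z + 2, i.e. N_q is affinely conjugate to the Newton map of z³ − 2z + 2. -/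
open Polynomial

/-- The Newton map of a complex polynomial `p`: `N_p(z) = z - p(z)/p'(z)`. -/
noncomputable def newtonIter (p : Polynomial ℂ) (z : ℂ) : ℂ :=
  z - p.eval z / p.derivative.eval z

/-- If a degree-three complex polynomial `q` has a super-attracting 2-cycle
`{w₁, w₂}` for its Newton map (labeled so that `q''(w₁) = 0`), and
`T(z) = (w₂ - w₁)z + w₁`, then `q ∘ T` is a nonzero scalar multiple of
`z³ - 2z + 2`; consequently, with `p(z) = z³ - 2z + 2`, for every `z` with
`p'(z) ≠ 0` we have `N_q(T z) = T (N_p z)`, i.e. `N_q` is affinely conjugate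
to the Newton map of `z³ - 2z + 2`. -/
theorem newton_cubic_superattracting_two_cycle_conjugate_smale
    (q : Polynomial ℂ) (hq : q.natDegree = 3)
    (w₁ w₂ : ℂ) (hw : w₁ ≠ w₂)
    (hq₁ : q.eval w₁ ≠ 0) (hq₂ : q.eval w₂ ≠ 0)
    (hq₁' : q.derivative.eval w₁ ≠ 0) (hq₂' : q.derivative.eval w₂ ≠ 0)
    (hN₁ : newtonIter q w₁ = w₂) (hN₂ : newtonIter q w₂ = w₁)
    (hsuper : q.derivative.derivative.eval w₁ = 0) :
    (∃ a : ℂ, a ≠ 0 ∧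
        q.comp (C (w₂ - w₁) * X + C w₁) = C a * (X ^ 3 - C 2 * X + C 2)) ∧
      (∀ z : ℂ,
        (X ^ 3 - C 2 * X + C 2 : Polynomial ℂ).derivative.eval z ≠ 0 →
        newtonIter q ((w₂ - w₁) * z + w₁) =
          (w₂ - w₁) * newtonIter (X ^ 3 - C 2 * X + C 2) z + w₁) := by
  set d : ℂ := w₂ - w₁ with hd_def
  have hd : d ≠ 0 := sub_ne_zero_of_ne (Ne.symm hw)
  set T : Polynomial ℂ := C d * X + C w₁ with hT_def
  set r : Polynomial ℂ := q.comp T with hr_def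
  have hT1 : T.natDegree = 1 := natDegree_linear hd
  have hr3 : r.natDegree = 3 := by
    rw [hr_def, natDegree_comp, hq, hT1, mul_one]
  have hTeval : ∀ x : ℂ, T.eval x = d * x + w₁ := by intro x; simp [hT_def]
  have hreval : ∀ x : ℂ, r.eval x = q.eval (d * x + w₁) := by
    intro x; rw [hr_def, eval_comp, hTeval]
  have hrd : derivative r = C d * (derivative q).comp T := by
    rw [hr_def, derivative_comp]; simp [hT_def]
  have hrdeval : ∀ x : ℂ, (derivative r).eval x = d * (derivative q).eval (d * x + w₁) := by
    intro x; rw [hrd]; simp [eval_comp, hTeval]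
  have hrdd : (derivative (derivative r)).eval 0 = 0 := by
    rw [hrd, derivative_mul, derivative_comp]
    simp [hT_def, eval_comp, hsuper]
  -- Newton conditions
  have hA1 : q.eval w₁ = -d * q.derivative.eval w₁ := by
    have := hN₁
    rw [newtonIter] at this
    field_simp at this
    rw [hd_def]; linear_combination -this
  have hA2 : q.eval w₂ = d * q.derivative.eval w₂ := by
    have := hN₂
    rw [newtonIter] at this
    field_simp at this
    rw [hd_def]; linear_combination -this
  -- write r in terms of its coefficients
  have hrsum : r = C (r.coeff 0) + C (r.coeff 1) * X + C (r.coeff 2) * X ^ 2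
      + C (r.coeff 3) * X ^ 3 := by
    conv_lhs => rw [r.as_sum_range' 4 (by omega)]
    simp [Finset.sum_range_succ, ← C_mul_X_pow_eq_monomial]
  set c0 := r.coeff 0
  set c1 := r.coeff 1
  set c2 := r.coeff 2
  set c3 := r.coeff 3
  have e0 : c0 = q.eval w₁ := by
    have := hreval 0; rw [hrsum] at this; simpa using this
  have e1 : c0 + c1 + c2 + c3 = q.eval w₂ := by
    have h := hreval 1
    rw [hrsum] at h
    rw [show d * 1 + w₁ = w₂ by rw [hd_def]; ring] at h
    simp at h
    linear_combination h
  have e0' : c1 = d * q.derivative.eval w₁ := by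
    have := hrdeval 0; rw [hrsum] at this; simpa using this
  have e1' : c1 + 2 * c2 + 3 * c3 = d * q.derivative.eval w₂ := by
    have h := hrdeval 1
    rw [show d * 1 + w₁ = w₂ by rw [hd_def]; ring] at h
    rw [hrsum] at h
    simp at h
    rw [hd_def]
    linear_combination h
  have e2 : c2 = 0 := by
    have := hrdd; rw [hrsum] at this; simp at this
    simpa using this
  -- solve: c0 = -c1, c0 = 2 c3
  have h01 : c0 = -c1 := by rw [e0, e0', hA1]; ring
  have h03 : c0 = 2 * c3 := by
    have h := e1
    rw [hA2, ← e1'] at h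
    linear_combination h + e2
  have hc3 : c3 ≠ 0 := by
    have hr0 : r ≠ 0 := fun h => by simp [h] at hr3
    have : c3 = r.leadingCoeff := by rw [leadingCoeff, hr3]
    rw [this]; exact leadingCoeff_ne_zero.mpr hr0
  have hc1 : c1 = -(2 * c3) := by linear_combination h01 - h03
  have hcomp : q.comp T = C c3 * (X ^ 3 - C 2 * X + C 2) := by
    rw [← hr_def, hrsum]
    rw [e2, hc1, h03]
    simp only [map_mul, map_neg, map_ofNat, C_0]
    ring
  refine ⟨⟨c3, hc3, hcomp⟩, ?_⟩
  intro z hp'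
  set p : Polynomial ℂ := X ^ 3 - C 2 * X + C 2 with hp_def
  have hqe : q.eval (d * z + w₁) = c3 * p.eval z := by
    have := congrArg (fun s => Polynomial.eval z s) hcomp
    simpa [eval_comp, hTeval] using this
  have hqe' : d * (derivative q).eval (d * z + w₁) = c3 * (derivative p).eval z := by
    have := congrArg (fun s => Polynomial.eval z (derivative s)) hcomp
    simp only [← hr_def] at this
    rw [hrd] at this
    simpa [eval_comp, hTeval, derivative_mul] using this
  have hq'ne : (derivative q).eval (d * z + w₁) ≠ 0 := by
    intro h
    rw [h, mul_zero] at hqe'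
    exact hp' (by
      have := hqe'.symm
      rcases mul_eq_zero.mp this with h | h
      · exact absurd h hc3
      · exact h)
  rw [newtonIter, newtonIter]
  have hpz' : (derivative p).eval z ≠ 0 := hp'
  have hdiv : q.eval (d * z + w₁) / (derivative q).eval (d * z + w₁)
      = d * p.eval z / (derivative p).eval z := by
    rw [div_eq_div_iff hq'ne hpz']
    linear_combination ((derivative p).eval z) * hqe - (p.eval z) * hqe'
  rw [hdiv]
  ring
end

section
/- If p is a complex polynomial of degree at most 3 such that p(0) ≠ 0, p(1) ≠ 0, p′(0) ≠ 0, p′(1) ≠ 0, N_p(0) = 1, N_p(1) = 0, and p″(0) = 0, then there is a nonzero complex number a with p(z) = a·(z³ − 2z + 2). -/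
open Polynomial

/-!
Writing `p = a z³ + b z² + c z + d`, the condition `p''(0) = 0` gives `b = 0`, and the two
Newton conditions read `p(0) = -p'(0)` and `p(1) = p'(1)`, i.e. `d = -c` and `d = 2a`.
Hence `p = a (z³ - 2z + 2)`, and `a = p'(1) ≠ 0`.
-/

theorem Polynomial.exists_eq_cubic_of_natDegree_le_three {R : Type*} [Semiring R] {p : R[X]}
    (h : p.natDegree ≤ 3) : ∃ a b c d : R, p = C a * X ^ 3 + C b * X ^ 2 + C c * X + C d := by
  refine ⟨p.coeff 3, p.coeff 2, p.coeff 1, p.coeff 0, ?_⟩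
  ext (_ | _ | _ | _ | n) <;> simp [coeff_X, coeff_X_pow]
  exact coeff_eq_zero_of_natDegree_lt (by omega)

/-- At a critical point `N_p(z) = z` by the convention `x / 0 = 0`, hence the hypothesis
`w ≠ z`. -/
theorem newtonIter_eq_iff {p : ℂ[X]} {z w : ℂ} (hw : w ≠ z) :
    newtonIter p z = w ↔
      p.derivative.eval z ≠ 0 ∧ p.eval z = (z - w) * p.derivative.eval z := by
  unfold newtonIter
  by_cases hz : p.derivative.eval z = 0
  · simp [hz, hw.symm]
  · rw [sub_eq_iff_eq_add, ← sub_eq_iff_eq_add', eq_div_iff hz]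
    simp [hz, eq_comm]

theorem poly_deg_le_three_superattracting_zero_one_eq_smale_general
    (p : Polynomial ℂ) (hdeg : p.natDegree ≤ 3)
    (hN0 : newtonIter p 0 = 1) (hN1 : newtonIter p 1 = 0)
    (h0'' : p.derivative.derivative.eval 0 = 0) :
    ∃ a : ℂ, a ≠ 0 ∧ p = C a * (X ^ 3 - C 2 * X + C 2) := by
  obtain ⟨a, b, c, d, rfl⟩ := exists_eq_cubic_of_natDegree_le_three hdeg
  rw [newtonIter_eq_iff one_ne_zero] at hN0
  rw [newtonIter_eq_iff zero_ne_one] at hN1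
  obtain rfl : b = 0 := by simpa using h0''
  obtain ⟨-, hdc⟩ : c ≠ 0 ∧ d = -c := by simpa using hN0
  obtain ⟨ha, h1⟩ : a * 3 + c ≠ 0 ∧ a + c + d = a * 3 + c := by norm_num at hN1; exact hN1
  have hd : d = 2 * a := by linear_combination h1
  have hc : c = -(2 * a) := by linear_combination hdc - hd
  subst hc hd
  refine ⟨a, fun h => ha (by rw [h]; ring), ?_⟩
  simp only [map_neg, map_mul, map_zero]
  ring

/-- If `p` is a complex polynomial of degree at most `3` with `p(0) ≠ 0`, `p(1) ≠ 0`,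
`p'(0) ≠ 0`, `p'(1) ≠ 0`, `N_p(0) = 1`, `N_p(1) = 0` and `p''(0) = 0`, then `p` is a
nonzero scalar multiple of `z³ - 2z + 2`. -/
theorem poly_deg_le_three_superattracting_zero_one_eq_smale
    (p : Polynomial ℂ) (hdeg : p.natDegree ≤ 3)
    (h0 : p.eval 0 ≠ 0) (h1 : p.eval 1 ≠ 0)
    (h0' : p.derivative.eval 0 ≠ 0) (h1' : p.derivative.eval 1 ≠ 0)
    (hN0 : newtonIter p 0 = 1) (hN1 : newtonIter p 1 = 0)
    (h0'' : p.derivative.derivative.eval 0 = 0) :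
    ∃ a : ℂ, a ≠ 0 ∧ p = C a * (X ^ 3 - C 2 * X + C 2) :=
  poly_deg_le_three_superattracting_zero_one_eq_smale_general p hdeg hN0 hN1 h0''
end

section
/- There exist sequences (c_k)_{k ≥ 1} and (d_k)_{k ≥ 1} of positive real numbers such that for every k ≥ 1: c_k is the least element of {y > 0 : Q_k(y) = y}, d_k is the least element of {y > 0 : 2y³ = 3·Q_k(y)²}, and 0 < c_{k+1} < d_{k+1} < c_k < d_k; moreover c_1 = 1 and d_1 = (3/2)^{1/3}. -/
/-- The functions `Q_k : ℝ → ℝ` defined recursively by `Q_1(y) = 1` and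
`Q_{k+1}(y) = (2y³ − 2Q_k(y)³)/(2y³ − 3Q_k(y)²)` (for `k ≥ 1`); `Q 0` is set to the
constant `0` (corresponding to `Q_k(c) = f_c^k(0)`), and is never used below. -/
noncomputable def Q : ℕ → ℝ → ℝ
  | 0, _ => 0
  | 1, _ => 1
  | (k + 2), y =>
      (2 * y ^ 3 - 2 * (Q (k + 1) y) ^ 3) / (2 * y ^ 3 - 3 * (Q (k + 1) y) ^ 2)

lemma Q_succ (k : ℕ) (y : ℝ) :
    Q (k + 2) y = (2 * y ^ 3 - 2 * (Q (k + 1) y) ^ 3) / (2 * y ^ 3 - 3 * (Q (k + 1) y) ^ 2) := rfl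

structure Good (k : ℕ) (c d : ℝ) : Prop where
  hc0 : 0 < c
  hc1 : c ≤ 1
  hcd : c < d
  lc : IsLeast {y : ℝ | 0 < y ∧ Q k y = y} c
  ld : IsLeast {y : ℝ | 0 < y ∧ 2 * y ^ 3 = 3 * (Q k y) ^ 2} d
  cont : ContinuousOn (Q k) (Set.Icc 0 c)
  hneg : ∀ y ∈ Set.Icc (0:ℝ) c, 2 * y ^ 3 - 3 * (Q k y) ^ 2 < 0
  h0 : 0 < Q k 0

lemma neg_on {f : ℝ → ℝ} {b : ℝ} (cont : ContinuousOn f (Set.Icc 0 b))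
    (h0 : f 0 < 0) (hnz : ∀ y ∈ Set.Icc (0:ℝ) b, f y ≠ 0) :
    ∀ y ∈ Set.Icc (0:ℝ) b, f y < 0 := by
  intro y hy
  by_contra h
  push_neg at h
  have hpos : 0 < f y := lt_of_le_of_ne h (Ne.symm (hnz y hy))
  have hsub : Set.Icc (0:ℝ) y ⊆ Set.Icc 0 b := Set.Icc_subset_Icc le_rfl hy.2
  obtain ⟨z, hz, hz0⟩ := intermediate_value_Icc hy.1 (cont.mono hsub) ⟨h0.le, hpos.le⟩
  exact hnz z (hsub hz) hz0

lemma exists_least_root {f : ℝ → ℝ} {b : ℝ}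
    (cont : ContinuousOn f (Set.Icc 0 b)) (h0 : f 0 ≠ 0)
    (hex : ∃ y ∈ Set.Icc (0:ℝ) b, f y = 0) :
    ∃ r, 0 < r ∧ r ≤ b ∧ f r = 0 ∧ ∀ y ∈ Set.Icc (0:ℝ) b, f y = 0 → r ≤ y := by
  set T : Set ℝ := Set.Icc 0 b ∩ f ⁻¹' {0} with hT
  have hTne : T.Nonempty := by
    obtain ⟨y, hy, hy0⟩ := hex
    exact ⟨y, hy, by simpa using hy0⟩
  have hTc : IsClosed T := cont.preimage_isClosed_of_isClosed isClosed_Icc isClosed_singleton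
  have hTcomp : IsCompact T :=
    isCompact_Icc.of_isClosed_subset hTc Set.inter_subset_left
  obtain ⟨r, hrT, hrlb⟩ := hTcomp.exists_isLeast hTne
  have hr0 : f r = 0 := by simpa using hrT.2
  have hrpos : 0 < r := by
    rcases lt_or_eq_of_le hrT.1.1 with h | h
    · exact h
    · exact absurd (h ▸ hr0) h0
  exact ⟨r, hrpos, hrT.1.2, hr0, fun y hy hy0 => hrlb ⟨hy, by simpa using hy0⟩⟩

lemma good_one : Good 1 1 ((3/2 : ℝ) ^ ((1:ℝ)/3)) := by
  have hQ1 : ∀ y : ℝ, Q 1 y = 1 := fun y => rfl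
  set d : ℝ := (3/2 : ℝ) ^ ((1:ℝ)/3) with hd
  have hd0 : 0 < d := Real.rpow_pos_of_pos (by norm_num) _
  have hd3 : d ^ 3 = 3/2 := by
    rw [hd, ← Real.rpow_natCast ((3/2 : ℝ) ^ ((1:ℝ)/3)) 3,
      ← Real.rpow_mul (by norm_num : (0:ℝ) ≤ 3/2)]
    norm_num
  have hd1 : 1 < d := by nlinarith [sq_nonneg (d - 1), sq_nonneg (d + 1), sq_nonneg d]
  refine ⟨one_pos, le_refl 1, hd1, ⟨⟨one_pos, rfl⟩, ?_⟩, ⟨⟨hd0, ?_⟩, ?_⟩, continuousOn_const, ?_, one_pos⟩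
  · rintro y ⟨hy0, hy⟩
    rw [hQ1] at hy
    exact hy.le
  · rw [hQ1]; nlinarith
  · rintro y ⟨hy0, hy⟩
    rw [hQ1] at hy
    by_contra h
    push_neg at h
    have : y ^ 3 < d ^ 3 := by
      apply pow_lt_pow_left₀ h hy0.le
      norm_num
    nlinarith
  · rintro y ⟨hy0, hy1⟩
    rw [hQ1]
    nlinarith [pow_le_one₀ hy0 hy1 (n := 3)]

lemma good_step {k : ℕ} (hk : 1 ≤ k) {c d : ℝ} (G : Good k c d) :
    ∃ c' d', Good (k + 1) c' d' ∧ d' < c := by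
  obtain ⟨m, rfl⟩ : ∃ m, k = m + 1 := ⟨k - 1, by omega⟩
  have hc0 := G.hc0
  have hc1 := G.hc1
  have hQ' : ∀ y, Q (m + 2) y =
      (2 * y ^ 3 - 2 * (Q (m+1) y) ^ 3) / (2 * y ^ 3 - 3 * (Q (m+1) y) ^ 2) := fun y => rfl
  have h0mem : (0:ℝ) ∈ Set.Icc (0:ℝ) c := ⟨le_refl 0, hc0.le⟩
  have hcmem : c ∈ Set.Icc (0:ℝ) c := ⟨hc0.le, le_refl c⟩
  -- continuity of Q (m+2) on [0, c]
  have cden : ContinuousOn (fun y : ℝ => 2 * y ^ 3 - 3 * (Q (m+1) y) ^ 2) (Set.Icc 0 c) :=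
    (continuousOn_const.mul (continuousOn_id.pow 3)).sub (continuousOn_const.mul (G.cont.pow 2))
  have cnum : ContinuousOn (fun y : ℝ => 2 * y ^ 3 - 2 * (Q (m+1) y) ^ 3) (Set.Icc 0 c) :=
    (continuousOn_const.mul (continuousOn_id.pow 3)).sub (continuousOn_const.mul (G.cont.pow 3))
  have cont' : ContinuousOn (Q (m + 2)) (Set.Icc 0 c) := by
    refine (cnum.div cden fun y hy => (G.hneg y hy).ne).congr fun y hy => ?_
    rw [hQ']
    rfl
  -- value at 0
  have hQ'0 : Q (m + 2) 0 = 2 * (Q (m+1) 0) / 3 := by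
    have ha := G.h0
    rw [hQ']
    rw [div_eq_div_iff (by nlinarith) (by norm_num)]
    ring
  have hQ'0pos : 0 < Q (m + 2) 0 := by
    have := G.h0; rw [hQ'0]; positivity
  -- value at c
  have hQc : Q (m+1) c = c := G.lc.1.2
  have hQ'c : Q (m + 2) c = 0 := by
    rw [hQ', hQc, sub_self, zero_div]
  -- the function h' = 2y³ - 3 Q'(y)²
  set h' : ℝ → ℝ := fun y => 2 * y ^ 3 - 3 * (Q (m+2) y) ^ 2 with hh'
  have conth' : ContinuousOn h' (Set.Icc 0 c) :=
    (continuousOn_const.mul (continuousOn_id.pow 3)).sub (continuousOn_const.mul (cont'.pow 2))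
  have hh'0 : h' 0 < 0 := by
    simp only [hh']
    nlinarith [hQ'0pos]
  have hh'c : 0 < h' c := by
    simp only [hh', hQ'c]
    nlinarith [pow_pos hc0 3]
  -- least root d' of h' in (0, c)
  obtain ⟨z, hz, hz0⟩ := intermediate_value_Icc hc0.le conth' ⟨hh'0.le, hh'c.le⟩
  obtain ⟨d', hd'0, hd'c, hd'root, hd'least⟩ :=
    exists_least_root conth' hh'0.ne ⟨z, hz, hz0⟩
  have hd'ltc : d' < c := lt_of_le_of_ne hd'c (by rintro rfl; exact hh'c.ne' hd'root)
  -- the function g = Q'(y) - y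
  set g : ℝ → ℝ := fun y => Q (m+2) y - y with hg
  have contg : ContinuousOn g (Set.Icc 0 c) := cont'.sub continuousOn_id
  have hg0 : 0 < g 0 := by simp only [hg]; linarith [hQ'0pos]
  have hgd' : g d' < 0 := by
    have h1 : 3 * (Q (m+2) d') ^ 2 = 2 * d' ^ 3 := by
      have : h' d' = 0 := hd'root
      simp only [hh'] at this; linarith
    have hd'le1 : d' ≤ 1 := hd'ltc.le.trans hc1
    have key : Q (m+2) d' < d' := by
      by_contra h
      push_neg at h
      have h2 : d' ^ 2 ≤ (Q (m+2) d') ^ 2 := pow_le_pow_left₀ hd'0.le h 2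
      nlinarith [mul_pos hd'0 hd'0, mul_pos (mul_pos hd'0 hd'0) hd'0]
    simp only [hg]
    linarith
  have hsubd' : Set.Icc (0:ℝ) d' ⊆ Set.Icc 0 c := Set.Icc_subset_Icc le_rfl hd'ltc.le
  obtain ⟨w, hw, hw0⟩ := intermediate_value_Icc' hd'0.le (contg.mono hsubd') ⟨hgd'.le, hg0.le⟩
  obtain ⟨c', hc'0, hc'd, hc'root, hc'least⟩ :=
    exists_least_root (contg.mono hsubd') hg0.ne' ⟨w, hw, hw0⟩
  have hc'ltd' : c' < d' := lt_of_le_of_ne hc'd (by rintro rfl; exact hgd'.ne hc'root)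
  have hQ'c' : Q (m+2) c' = c' := by
    have : g c' = 0 := hc'root
    simp only [hg] at this; linarith
  have hc'le1 : c' ≤ 1 := le_of_lt (lt_of_lt_of_le (hc'ltd'.trans hd'ltc) hc1)
  have hsubc' : Set.Icc (0:ℝ) c' ⊆ Set.Icc 0 c :=
    Set.Icc_subset_Icc le_rfl (hc'ltd'.trans hd'ltc).le
  -- h' < 0 on [0, c']
  have hnegc' : ∀ y ∈ Set.Icc (0:ℝ) c', h' y < 0 := by
    refine neg_on (conth'.mono hsubc') hh'0 fun y hy hy0 => ?_
    have := hd'least y (hsubc' hy) hy0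
    linarith [hy.2]
  refine ⟨c', d', ⟨hc'0, hc'le1, hc'ltd', ⟨⟨hc'0, hQ'c'⟩, ?_⟩, ⟨⟨hd'0, ?_⟩, ?_⟩,
    cont'.mono hsubc', hnegc', hQ'0pos⟩, hd'ltc⟩
  · rintro y ⟨hy0, hy⟩
    rcases le_or_gt y d' with h | h
    · exact hc'least y ⟨hy0.le, h⟩ (by simp only [hg]; linarith)
    · linarith
  · have : h' d' = 0 := hd'root
    simp only [hh'] at this; linarith
  · rintro y ⟨hy0, hy⟩
    rcases le_or_gt y c with h | h
    · exact hd'least y ⟨hy0.le, h⟩ (by simp only [hh']; linarith)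
    · linarith

lemma good_exists : ∀ k : ℕ, ∃ c d, Good (k + 1) c d := by
  intro k
  induction k with
  | zero => exact ⟨1, _, good_one⟩
  | succ n ih =>
    obtain ⟨c, d, G⟩ := ih
    obtain ⟨c', d', G', _⟩ := good_step (Nat.le_add_left 1 n) G
    exact ⟨c', d', G'⟩

/-- There exist sequences `(c_k)` and `(d_k)` of positive reals such that for every
`k ≥ 1`: `c_k` is the least element of `{y > 0 : Q_k(y) = y}`, `d_k` is the least
element of `{y > 0 : 2y³ = 3 Q_k(y)²}`, and `0 < c_{k+1} < d_{k+1} < c_k < d_k`;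
moreover `c_1 = 1` and `d_1 = (3/2)^(1/3)`. -/
theorem exists_interlacing_least_solutions :
    ∃ c d : ℕ → ℝ,
      (∀ k : ℕ, 1 ≤ k → IsLeast {y : ℝ | 0 < y ∧ Q k y = y} (c k)) ∧
      (∀ k : ℕ, 1 ≤ k → IsLeast {y : ℝ | 0 < y ∧ 2 * y ^ 3 = 3 * (Q k y) ^ 2} (d k)) ∧
      (∀ k : ℕ, 1 ≤ k →
        0 < c (k + 1) ∧ c (k + 1) < d (k + 1) ∧ d (k + 1) < c k ∧ c k < d k) ∧
      c 1 = 1 ∧ d 1 = (3 / 2 : ℝ) ^ ((1 : ℝ) / 3) := by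
  classical
  choose c0 d0 hG using good_exists
  refine ⟨fun k => c0 (k - 1), fun k => d0 (k - 1), ?_, ?_, ?_, ?_, ?_⟩
  · intro k hk
    have h : k - 1 + 1 = k := Nat.succ_pred_eq_of_pos hk
    exact h ▸ (hG (k - 1)).lc
  · intro k hk
    have h : k - 1 + 1 = k := Nat.succ_pred_eq_of_pos hk
    exact h ▸ (hG (k - 1)).ld
  · intro k hk
    have h : k - 1 + 1 = k := Nat.succ_pred_eq_of_pos hk
    have Gk : Good k (c0 (k - 1)) (d0 (k - 1)) := h ▸ hG (k - 1)
    have Gk1 : Good (k + 1) (c0 k) (d0 k) := by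
      have : k + 1 - 1 = k := rfl
      exact hG k
    obtain ⟨c', d', G', hd'⟩ := good_step hk Gk
    have hc'eq : c0 k = c' := Gk1.lc.unique G'.lc
    have hd'eq : d0 k = d' := Gk1.ld.unique G'.ld
    simp only []
    have h1 : k + 1 - 1 = k := rfl
    rw [h1]
    exact ⟨Gk1.hc0, Gk1.hcd, by rw [hd'eq]; exact hd', Gk.hcd⟩
  · exact (hG 0).lc.unique good_one.lc
  · exact (hG 0).ld.unique good_one.ld
end
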